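/- If S ⊆ Bin(X) is a distributive set, then the submonoid M(S) of Bin(X) generated by S is also a distributive set (a distributive monoid). -/

import Mathlib

/-- Binary operations on `X`. -/
def BinOp (X : Type*) : Type _ := X → X → X

/-- The monoid `Bin(X)` with composition `a(∗₁∗₂)b = (a∗₁b)∗₂b` and identity `a∗₀b = a`. -/
instance {X : Type*} : Monoid (BinOp X) where
  mul f g := fun a b => g (f a b) b
  one := fun a _ => a
  mul_assoc _ _ _ := rfl
  one_mul _ := rfl
  mul_one _ := rfl

/-- `S` is a distributive set. -/
def IsDistribSet {X : Type*} (S : Set (BinOp X)) : Prop :=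
  ∀ f ∈ S, ∀ g ∈ S, ∀ a b c : X, g (f a b) c = f (g a c) (g b c)

/-! The operations over which a fixed operation distributes form a submonoid of `Bin(X)`, and so
do the operations distributing over a fixed one. Hence distributivity passes from the
generators `S` to `M(S)`, first in one argument, then in the other. -/

namespace BinOp

variable {X : Type*}

theorem mul_apply (f g : BinOp X) (a b : X) : (f * g) a b = g (f a b) b := rfl

/-- In infix notation, `(a ∗f b) ∗g c = (a ∗g c) ∗f (b ∗g c)`. -/
def DistribOver (g f : BinOp X) : Prop :=
  ∀ a b c : X, g (f a b) c = f (g a c) (g b c)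

theorem one_distribOver (f : BinOp X) : (1 : BinOp X).DistribOver f := fun _ _ _ => rfl

theorem distribOver_one (g : BinOp X) : g.DistribOver 1 := fun _ _ _ => rfl

theorem DistribOver.mul_left {g₁ g₂ f : BinOp X} (h₁ : g₁.DistribOver f)
    (h₂ : g₂.DistribOver f) : (g₁ * g₂).DistribOver f := by
  intro a b c
  simp only [mul_apply, h₁ a b c, h₂ _ _ c]

theorem DistribOver.mul_right {g f₁ f₂ : BinOp X} (h₁ : g.DistribOver f₁)
    (h₂ : g.DistribOver f₂) : g.DistribOver (f₁ * f₂) := by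
  intro a b c
  simp only [mul_apply, h₂ _ b c, h₁ a b c]

def distribOverSubmonoid (f : BinOp X) : Submonoid (BinOp X) where
  carrier := {g | g.DistribOver f}
  one_mem' := one_distribOver f
  mul_mem' := DistribOver.mul_left

def distributedSubmonoid (g : BinOp X) : Submonoid (BinOp X) where
  carrier := {f | g.DistribOver f}
  one_mem' := distribOver_one g
  mul_mem' := DistribOver.mul_right

end BinOp

/-- If `S ⊆ Bin(X)` is a distributive set, then the submonoid `M(S)` of `Bin(X)` generated
by `S` is also a distributive set (a distributive monoid). -/
theorem stmt3 {X : Type*} (S : Set (BinOp X)) (hS : IsDistribSet S) :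
    IsDistribSet (Submonoid.closure S : Set (BinOp X)) := by
  have over_generators : ∀ g ∈ Submonoid.closure S, ∀ f ∈ S, g.DistribOver f :=
    fun g hg f hf => Submonoid.closure_le (S := BinOp.distribOverSubmonoid f).2 (hS f hf) hg
  intro f hf g hg
  exact Submonoid.closure_le (S := BinOp.distributedSubmonoid g).2 (over_generators g hg) hf
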